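/- arXiv:0901.3090 — 5 statements merged into one kernel-verified Lean document; each statement's English description precedes it below -/
import Mathlib

section
/- Let k be a field, A a finite-dimensional unital k-algebra with d = dim_k A, and M a finitely generated A-module. Then there exists a projective resolution ⋯ → P_n → P_{n−1} → ⋯ → P_0 → M → 0 of M by finitely generated projective A-modules such that dim_k P_n ≤ d·(d−1)^n·dim_k M for every n ∈ ℕ. In particular, every finitely generated module over a finite-dimensional algebra admits a projective resolution whose terms have dimensions bounded by an exponential function of n. -/
/-!
A `k`-basis of a finite-dimensional `A`-module `N` generates it over `A`, so `A ^ dim N → N` is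
onto and its kernel has dimension `dim N * (d - 1)`. Iterating on these kernels gives a free
resolution whose `n`-th term has dimension exactly `d * (d - 1) ^ n * dim M`.
-/

open CategoryTheory Module

universe u v

theorem Module.finrank_fin_fun_eq_mul (R V : Type*) [Ring R] [StrongRankCondition R]
    [AddCommGroup V] [Module R V] [Module.Free R V] [Module.Finite R V] (m : ℕ) :
    finrank R (Fin m → V) = m * finrank R V := by
  rw [finrank_pi_fintype, Finset.sum_const, Finset.card_univ, Fintype.card_fin, smul_eq_mul]

theorem finrank_restrictScalars_of_isScalarTower (R S X : Type*) [CommSemiring R] [Semiring S]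
    [Algebra R S] [AddCommMonoid X] [Module R X] [Module S X] [IsScalarTower R S X] :
    finrank R (RestrictScalars R S X) = finrank R X :=
  LinearEquiv.finrank_eq
    { RestrictScalars.addEquiv R S X with
      map_smul' := fun c x => algebraMap_smul S c (RestrictScalars.addEquiv R S X x) }

theorem LinearMap.range_subtype_comp_of_surjective {R M N : Type*} [Semiring R]
    [AddCommMonoid M] [Module R M] [AddCommMonoid N] [Module R N] {p : Submodule R M}
    {f : N →ₗ[R] p} (hf : Function.Surjective f) :
    LinearMap.range (p.subtype ∘ₗ f) = p := by
  rw [LinearMap.range_comp, LinearMap.range_eq_top.2 hf, Submodule.map_top,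
    Submodule.range_subtype]

instance Submodule.finiteDimensional_of_isScalarTower (k A V : Type*) [Field k] [Ring A]
    [Algebra k A] [AddCommGroup V] [Module k V] [Module A V] [IsScalarTower k A V]
    [FiniteDimensional k V] (p : Submodule A V) : FiniteDimensional k p :=
  .of_injective (p.subtype.restrictScalars k) Subtype.val_injective

section Presentation

variable (k : Type u) [Field k] (A : Type v) [Ring A] [Algebra k A]
  (N : Type*) [AddCommGroup N] [Module k N] [Module A N] [IsScalarTower k A N]
  [FiniteDimensional k N]

noncomputable def basisPresentation : (Fin (finrank k N) → A) →ₗ[A] N :=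
  Fintype.linearCombination A (finBasis k N)

theorem basisPresentation_surjective : Function.Surjective (basisPresentation k A N) :=
  fun x => ⟨fun i => algebraMap k A ((finBasis k N).repr x i), by
    simp only [basisPresentation, Fintype.linearCombination_apply, algebraMap_smul,
      Basis.sum_repr]⟩

theorem finrank_ker_basisPresentation [FiniteDimensional k A] :
    finrank k (LinearMap.ker (basisPresentation k A N)) = finrank k N * (finrank k A - 1) := by
  have rank_nullity := ((basisPresentation k A N).restrictScalars k).finrank_range_add_finrank_ker
  rw [(LinearMap.range_eq_top (f := (basisPresentation k A N).restrictScalars k)).2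
      (basisPresentation_surjective k A N), finrank_top, LinearMap.ker_restrictScalars,
    finrank_fin_fun_eq_mul] at rank_nullity
  change finrank k N + finrank k (LinearMap.ker (basisPresentation k A N)) = _ at rank_nullity
  rw [Nat.mul_sub_one]
  omega

end Presentation

/-- Bundled so that `syzygy` can be iterated. -/
structure FiniteDimModule (k : Type u) [Field k] (A : Type v) [Ring A] [Algebra k A] where
  carrier : Type v
  [addCommGroup : AddCommGroup carrier]
  [moduleK : Module k carrier]
  [moduleA : Module A carrier]
  [isScalarTower : IsScalarTower k A carrier]
  [finiteDimensional : FiniteDimensional k carrier]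

namespace FiniteDimModule

attribute [instance] addCommGroup moduleK moduleA isScalarTower finiteDimensional

variable {k : Type u} [Field k] {A : Type v} [Ring A] [Algebra k A]

instance : CoeSort (FiniteDimModule k A) (Type v) := ⟨carrier⟩

variable [FiniteDimensional k A]

noncomputable def syzygy (N : FiniteDimModule k A) : FiniteDimModule k A :=
  ⟨LinearMap.ker (basisPresentation k A N)⟩

noncomputable def syzygies (N : FiniteDimModule k A) : ℕ → FiniteDimModule k A
  | 0 => N
  | n + 1 => (N.syzygies n).syzygy

theorem finrank_syzygies (N : FiniteDimModule k A) (n : ℕ) :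
    finrank k (N.syzygies n) = (finrank k A - 1) ^ n * finrank k N := by
  induction n with
  | zero => rw [syzygies, pow_zero, one_mul]
  | succ n ih =>
    rw [syzygies, syzygy, finrank_ker_basisPresentation, ih, pow_succ]
    ring

noncomputable def differential (N : FiniteDimModule k A) (n : ℕ) :
    (Fin (finrank k (N.syzygies (n + 1))) → A) →ₗ[A] Fin (finrank k (N.syzygies n)) → A :=
  (LinearMap.ker (basisPresentation k A (N.syzygies n))).subtype ∘ₗ
    basisPresentation k A (N.syzygies (n + 1))

theorem range_differential (N : FiniteDimModule k A) (n : ℕ) :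
    LinearMap.range (N.differential n) = LinearMap.ker (basisPresentation k A (N.syzygies n)) :=
  LinearMap.range_subtype_comp_of_surjective <|
    basisPresentation_surjective k A (N.syzygies (n + 1))

theorem ker_differential (N : FiniteDimModule k A) (n : ℕ) :
    LinearMap.ker (N.differential n) =
      LinearMap.ker (basisPresentation k A (N.syzygies (n + 1))) :=
  LinearMap.ker_comp_of_ker_eq_bot _ (Submodule.ker_subtype _)

end FiniteDimModule

/-- Over a finite-dimensional algebra `A` (with `d = dim_k A`), every
finitely generated `A`-module `M` admits a projective resolution
`⋯ → P n → ⋯ → P 0 → M → 0` by finitely generated projective `A`-modules with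
`dim_k (P n) ≤ d * (d-1)^n * dim_k M` for all `n`. -/
theorem exists_projective_resolution_dim_le
    (k : Type u) [Field k] (A : Type v) [Ring A] [Algebra k A] [FiniteDimensional k A]
    (M : Type v) [AddCommGroup M] [Module A M] [Module.Finite A M] :
    ∃ (P : ℕ → ModuleCat.{v} A) (δ : ∀ n, P (n + 1) ⟶ P n) (π : P 0 ⟶ ModuleCat.of A M),
      (∀ n, Projective (P n)) ∧
      (∀ n, Module.Finite A (P n)) ∧
      Function.Surjective π ∧
      LinearMap.range (δ 0).hom = LinearMap.ker π.hom ∧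
      (∀ n, LinearMap.range (δ (n + 1)).hom = LinearMap.ker (δ n).hom) ∧
      (∀ n, Module.finrank k (RestrictScalars k A (P n)) ≤
        Module.finrank k A * (Module.finrank k A - 1) ^ n *
          Module.finrank k (RestrictScalars k A M)) := by
  -- the `k`-structure of `RestrictScalars k A M`, so that the dimensions of `M` agree by `rfl`
  let : Module k M := .compHom M (algebraMap k A)
  have : IsScalarTower k A M := .of_compHom k A M
  have : FiniteDimensional k M := Module.Finite.trans A M
  let N : FiniteDimModule k A := ⟨M⟩
  refine ⟨fun n => ModuleCat.of A (Fin (finrank k (N.syzygies n)) → A),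
    fun n => ModuleCat.ofHom (N.differential n), ModuleCat.ofHom (basisPresentation k A M),
    fun n => inferInstance, fun n => inferInstanceAs (Module.Finite A (Fin _ → A)),
    basisPresentation_surjective k A M, N.range_differential 0, fun n => ?_, fun n => le_of_eq ?_⟩
  · rw [ModuleCat.hom_ofHom, ModuleCat.hom_ofHom, N.range_differential, N.ker_differential]
  · calc finrank k (RestrictScalars k A (Fin (finrank k (N.syzygies n)) → A))
        = finrank k (N.syzygies n) * finrank k A := by
          rw [finrank_restrictScalars_of_isScalarTower, finrank_fin_fun_eq_mul]
      _ = finrank k A * (finrank k A - 1) ^ n * finrank k N := by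
          rw [N.finrank_syzygies]
          ring
      _ = finrank k A * (finrank k A - 1) ^ n * finrank k (RestrictScalars k A M) := rfl
end

section
/- Let k be a field, p a prime, and m ≥ 1 an integer. For an integer j ≥ 1 write E_j = k[X]/(X^j), a k[X]-module. Let 0 ≤ h < m and let d be an integer with p^h < d < p^{h+1}. Let e_d : E_{p^h} × E_{p^{h+1}} → E_d be the k[X]-linear map induced by (Q,R) ↦ X^{d−p^h}·Q + R (well defined since d − p^h + p^h = d and p^{h+1} ≥ d). Then for every integer l with 0 ≤ l ≤ m, the map e_d sends {(Q,R) ∈ E_{p^h} × E_{p^{h+1}} : X^{p^l}·Q = 0 and X^{p^l}·R = 0} onto {S ∈ E_d : X^{p^l}·S = 0}. In particular (taking l = m) e_d is surjective. -/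
open Polynomial

/-- `Emod k j` is the `k[X]`-module `k[X]/(X^j)`. -/
abbrev Emod (k : Type*) [Field k] (j : ℕ) :=
  Polynomial k ⧸ Ideal.span {(X : Polynomial k) ^ j}

/-- The `k[X]`-linear map `k[X]/(X^a) → k[X]/(X^d)` induced by multiplication
by `X^t`, well defined when `d ≤ t + a`. -/
noncomputable def shiftMap (k : Type*) [Field k] (a d t : ℕ) (hle : d ≤ t + a) :
    Emod k a →ₗ[Polynomial k] Emod k d :=
  Submodule.mapQ (Ideal.span {(X : Polynomial k) ^ a}) (Ideal.span {(X : Polynomial k) ^ d})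
    (LinearMap.lsmul (Polynomial k) (Polynomial k) (X ^ t))
    (by
      refine Submodule.span_le.2 ?_
      simp only [Set.singleton_subset_iff, SetLike.mem_coe, Submodule.mem_comap,
        LinearMap.lsmul_apply, smul_eq_mul, Ideal.submodule_span_eq, Ideal.mem_span_singleton,
        ← pow_add]
      exact pow_dvd_pow _ hle)

/-- The `k[X]`-linear map `e_d : k[X]/(X^a) × k[X]/(X^b) → k[X]/(X^d)` induced by
`(Q, R) ↦ X^(d-a)·Q + R`, for `a ≤ d ≤ b`. -/
noncomputable def eD (k : Type*) [Field k] (a b d : ℕ) (h1 : a ≤ d) (h2 : d ≤ b) :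
    Emod k a × Emod k b →ₗ[Polynomial k] Emod k d :=
  (shiftMap k a d (d - a) (by omega)).coprod (shiftMap k b d 0 (by omega))

/-!
Let `S ∈ E_d` with `X^n S = 0`. If `n ≤ a`, then `S` is divisible by `X^(d-n)`, say
`S = X^(d-n) g`, and it is the image of `(X^(a-n) g, 0)`, which is killed by `X^n`. If `b ≤ n`,
then `X^n` kills all of `E_b`, and `S` is the image of `(0, S)`. For `a = p^h`, `b = p^(h+1)` and
`n = p^l` one of the two cases always occurs, because there is no power of `p` strictly between
`p^h` and `p^(h+1)`.
-/

namespace Emod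

variable {k : Type*} [Field k]

theorem mk_eq_zero_iff {j : ℕ} (f : k[X]) :
    (Submodule.Quotient.mk f : Emod k j) = 0 ↔ (X : k[X]) ^ j ∣ f := by
  rw [Submodule.Quotient.mk_eq_zero]
  exact Ideal.mem_span_singleton

theorem X_pow_smul_eq_zero_iff {j n : ℕ} (f : k[X]) :
    ((X : k[X]) ^ n • Submodule.Quotient.mk f : Emod k j) = 0 ↔
      (X : k[X]) ^ j ∣ X ^ n * f := by
  rw [← Submodule.Quotient.mk_smul, smul_eq_mul, mk_eq_zero_iff]

theorem X_pow_smul_eq_zero_of_le {j n : ℕ} (hjn : j ≤ n) (s : Emod k j) :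
    (X : k[X]) ^ n • s = 0 := by
  obtain ⟨f, rfl⟩ := Submodule.Quotient.mk_surjective _ s
  rw [X_pow_smul_eq_zero_iff]
  exact (pow_dvd_pow X hjn).mul_right f

end Emod

section eD

variable {k : Type*} [Field k] {a b d : ℕ}

theorem shiftMap_mk (t : ℕ) (hle : d ≤ t + a) (f : k[X]) :
    shiftMap k a d t hle (Submodule.Quotient.mk f) = Submodule.Quotient.mk (X ^ t * f) := by
  rw [shiftMap, Submodule.mapQ_apply]
  rfl

theorem eD_mk (h1 : a ≤ d) (h2 : d ≤ b) (q r : k[X]) :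
    eD k a b d h1 h2 (Submodule.Quotient.mk q, Submodule.Quotient.mk r) =
      Submodule.Quotient.mk (X ^ (d - a) * q + r) := by
  rw [eD, LinearMap.coprod_apply, shiftMap_mk, shiftMap_mk, pow_zero, one_mul,
    ← Submodule.Quotient.mk_add]

theorem eD_zero_mk (h1 : a ≤ d) (h2 : d ≤ b) (r : k[X]) :
    eD k a b d h1 h2 (0, Submodule.Quotient.mk r) = Submodule.Quotient.mk r := by
  rw [← Submodule.Quotient.mk_zero, eD_mk, mul_zero, zero_add]

theorem eD_surjective (h1 : a ≤ d) (h2 : d ≤ b) : Function.Surjective (eD k a b d h1 h2) := by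
  intro s
  obtain ⟨f, rfl⟩ := Submodule.Quotient.mk_surjective _ s
  exact ⟨(0, Submodule.Quotient.mk f), eD_zero_mk h1 h2 f⟩

theorem exists_eD_eq_of_le_left (h1 : a ≤ d) (h2 : d ≤ b) {n : ℕ} (hna : n ≤ a)
    {s : Emod k d} (hs : (X : k[X]) ^ n • s = 0) :
    ∃ qr : Emod k a × Emod k b, (X : k[X]) ^ n • qr = 0 ∧ eD k a b d h1 h2 qr = s := by
  obtain ⟨f, rfl⟩ := Submodule.Quotient.mk_surjective _ s
  obtain ⟨g, rfl⟩ : X ^ (d - n) ∣ f := by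
    rw [Emod.X_pow_smul_eq_zero_iff, ← Nat.add_sub_cancel' (hna.trans h1), pow_add] at hs
    exact (mul_dvd_mul_iff_left (pow_ne_zero n X_ne_zero)).1 hs
  refine ⟨(Submodule.Quotient.mk (X ^ (a - n) * g), 0), ?_, ?_⟩
  · rw [Prod.smul_mk, smul_zero, Prod.mk_eq_zero, and_iff_left rfl,
      Emod.X_pow_smul_eq_zero_iff, ← mul_assoc, ← pow_add, Nat.add_sub_cancel' hna]
    exact dvd_mul_right _ _
  · rw [← Submodule.Quotient.mk_zero, eD_mk, add_zero, ← mul_assoc, ← pow_add,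
      Nat.sub_add_sub_cancel h1 hna]

theorem exists_eD_eq_of_le_right (h1 : a ≤ d) (h2 : d ≤ b) {n : ℕ} (hbn : b ≤ n)
    (s : Emod k d) :
    ∃ qr : Emod k a × Emod k b, (X : k[X]) ^ n • qr = 0 ∧ eD k a b d h1 h2 qr = s := by
  obtain ⟨f, rfl⟩ := Submodule.Quotient.mk_surjective _ s
  exact ⟨(0, Submodule.Quotient.mk f),
    Prod.ext (smul_zero _) (Emod.X_pow_smul_eq_zero_of_le hbn _), eD_zero_mk h1 h2 f⟩

theorem eD_image_X_pow_torsion (h1 : a ≤ d) (h2 : d ≤ b) {n : ℕ} (hn : n ≤ a ∨ b ≤ n) :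
    eD k a b d h1 h2 '' {qr | (X : k[X]) ^ n • qr = 0} = {s | (X : k[X]) ^ n • s = 0} := by
  ext s
  constructor
  · rintro ⟨qr, hqr : (X : k[X]) ^ n • qr = 0, rfl⟩
    show (X : k[X]) ^ n • eD k a b d h1 h2 qr = 0
    rw [← map_smul, hqr, map_zero]
  · intro hs
    rcases hn with hna | hbn
    · exact exists_eD_eq_of_le_left h1 h2 hna hs
    · exact exists_eD_eq_of_le_right h1 h2 hbn s

end eD

theorem eD_image_torsion_general (k : Type*) [Field k] (p m h d : ℕ) (hp : p.Prime)
    (hd1 : p ^ h < d) (hd2 : d < p ^ (h + 1)) :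
    (∀ l ≤ m,
      (eD k (p ^ h) (p ^ (h + 1)) d hd1.le hd2.le) ''
          {qr : Emod k (p ^ h) × Emod k (p ^ (h + 1)) |
            (X : Polynomial k) ^ p ^ l • qr.1 = 0 ∧ (X : Polynomial k) ^ p ^ l • qr.2 = 0} =
        {s : Emod k d | (X : Polynomial k) ^ p ^ l • s = 0}) ∧
    Function.Surjective (eD k (p ^ h) (p ^ (h + 1)) d hd1.le hd2.le) := by
  refine ⟨fun l _ => ?_, eD_surjective _ _⟩
  have hl : p ^ l ≤ p ^ h ∨ p ^ (h + 1) ≤ p ^ l := by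
    rcases le_or_gt l h with hlh | hhl
    · exact Or.inl (Nat.pow_le_pow_right hp.pos hlh)
    · exact Or.inr (Nat.pow_le_pow_right hp.pos hhl)
  simpa only [Prod.ext_iff, Prod.smul_fst, Prod.smul_snd, Prod.fst_zero, Prod.snd_zero] using
    eD_image_X_pow_torsion hd1.le hd2.le hl

/-- For `0 ≤ h < m` and `p^h < d < p^(h+1)`, the map
`e_d : E_{p^h} × E_{p^(h+1)} → E_d` maps, for every `l ≤ m`, the pairs killed by
`X^(p^l)` onto the set of elements of `E_d` killed by `X^(p^l)`; in particular `e_d`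
is surjective. -/
theorem eD_image_torsion (k : Type*) [Field k] (p m h d : ℕ) (hp : p.Prime)
    (hh : h < m) (hd1 : p ^ h < d) (hd2 : d < p ^ (h + 1)) :
    (∀ l ≤ m,
      (eD k (p ^ h) (p ^ (h + 1)) d hd1.le hd2.le) ''
          {qr : Emod k (p ^ h) × Emod k (p ^ (h + 1)) |
            (X : Polynomial k) ^ p ^ l • qr.1 = 0 ∧ (X : Polynomial k) ^ p ^ l • qr.2 = 0} =
        {s : Emod k d | (X : Polynomial k) ^ p ^ l • s = 0}) ∧
    Function.Surjective (eD k (p ^ h) (p ^ (h + 1)) d hd1.le hd2.le) :=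
  eD_image_torsion_general k p m h d hp hd1 hd2
end

section
/- Let p be a prime and G a finite p-group. Let R and S be subgroups of G and let T = Φ(R)·Φ(S)·⁅R,S⁆ be the subgroup of G generated by the Frattini subgroups Φ(R) and Φ(S) (viewed as subgroups of G) and the commutator subgroup ⁅R,S⁆. Assume T ≤ R ∩ S. Then: (1) R and S normalize each other, so R·S is a subgroup of G normalizing R and S; (2) T equals the Frattini subgroup Φ(R·S) of R·S; (3) the quotient (R·S)/T is elementary abelian, and the images of R and S in it are (elementary abelian) subgroups centralizing each other. -/
open scoped Pointwise
open scoped commutatorElement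

/-!
In a finite `p`-group `P`, the Frattini subgroup is the smallest normal subgroup with elementary
abelian quotient: maximal subgroups are normal of index `p`, hence contain all `p`-th powers and
commutators; conversely, in a finite elementary abelian group a subgroup maximal among those
avoiding a given `z ≠ 1` is a maximal subgroup.

Since `⁅R, S⁆ ≤ R ⊓ S`, the subgroups `R` and `S` normalize each other and `T`, so `R ⊔ S = R * S`.
Modulo `T` the images of `R` and `S` are elementary abelian and commute elementwise, so
`(R ⊔ S) / T` is elementary abelian and `Φ(R ⊔ S) ≤ T`. Conversely `Φ` is monotone on subgroups
of a `p`-group and contains all commutators, which gives `T ≤ Φ(R ⊔ S)`.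
-/

open Subgroup

variable {p : ℕ} [hp : Fact p.Prime]

theorem Subgroup.mem_of_pow_mem_of_not_dvd {Q : Type*} [Group Q] {H : Subgroup Q} {y : Q}
    (hy : y ^ p = 1) {m : ℕ} (hm : ¬ p ∣ m) (hym : y ^ m ∈ H) : y ∈ H := by
  have hcop : m.Coprime (orderOf y) :=
    (Nat.coprime_comm.mp (hp.out.coprime_iff_not_dvd.mpr hm)).coprime_dvd_right
      (orderOf_dvd_of_pow_eq_one hy)
  obtain ⟨k, hk⟩ := exists_pow_eq_self_of_coprime hcop
  exact hk ▸ pow_mem hym k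

theorem frattini_eq_bot_of_pow_eq_one {Q : Type*} [Group Q] [IsMulCommutative Q] [Finite Q]
    (hQ : ∀ x : Q, x ^ p = 1) : frattini Q = ⊥ := by
  refine eq_bot_iff.mpr fun z hz => by_contra fun hz1 => ?_
  obtain ⟨K, hzK, hK⟩ := (Set.toFinite {K : Subgroup Q | z ∉ K}).exists_maximal ⟨⊥, hz1⟩
  have hsup : K ⊔ zpowers z = ⊤ := by
    refine eq_top_iff.mpr fun y _ => ?_
    by_cases hy : y ∈ K
    · exact mem_sup_left hy
    -- By maximality `z = k * y ^ m` with `k ∈ K` and `p ∤ m`, so `y ^ m ∈ K ⊔ zpowers z`.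
    have hz : z ∈ K ⊔ zpowers y := by_contra fun h =>
      hy (hK h le_sup_left (mem_sup_right (mem_zpowers y)))
    obtain ⟨k, hk, w, hw, rfl⟩ := mem_sup_of_normal_right.mp hz
    obtain ⟨m, rfl⟩ := mem_powers_iff_mem_zpowers.mpr hw
    have hm : ¬ p ∣ m := by
      rintro ⟨t, rfl⟩
      simp only [pow_mul, hQ, one_pow, mul_one] at hzK
      exact hzK hk
    refine mem_of_pow_mem_of_not_dvd (hQ y) hm ?_
    simpa using mul_mem (mem_sup_left (inv_mem hk)) (mem_sup_right (mem_zpowers (k * y ^ m)))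
  have hKco : IsCoatom K := by
    refine ⟨fun h => hzK (h ▸ mem_top z), fun L hKL => top_le_iff.mp (hsup ▸ sup_le hKL.le ?_)⟩
    exact zpowers_le.mpr (by_contra fun hzL => hKL.not_ge (hK hzL hKL.le))
  exact hzK (frattini_le_coatom hKco hz)

theorem frattini_le_of_pow_mem_of_commutatorElement_mem {P : Type*} [Group P] [Finite P]
    (N : Subgroup P) [N.Normal] (hpow : ∀ x : P, x ^ p ∈ N) (hcomm : ∀ x y : P, ⁅x, y⁆ ∈ N) :
    frattini P ≤ N := by
  have : IsMulCommutative (P ⧸ N) := Normal.quotient_commutative_iff_commutator_le.mpr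
    (commutator_le.mpr fun x _ y _ => hcomm x y)
  have hQ : ∀ x : P ⧸ N, x ^ p = 1 := QuotientGroup.mk_surjective.forall.mpr fun x => by
    rw [← QuotientGroup.mk_pow, QuotientGroup.eq_one_iff]
    exact hpow x
  simpa [frattini_eq_bot_of_pow_eq_one hQ] using
    frattini_le_comap_frattini_of_surjective (QuotientGroup.mk'_surjective N)

namespace IsPGroup

section

variable {P : Type*} [Group P] [Finite P]

theorem index_eq_of_isCoatom (hP : IsPGroup p P) {K : Subgroup P} (hK : IsCoatom K) :
    K.index = p := by
  obtain ⟨n, hn⟩ := (hP.to_subgroup K).exists_card_eq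
  obtain ⟨m, hm⟩ := hP.exists_card_eq
  have hnm : n < m := by
    have hlt : Nat.card K < Nat.card P :=
      (card_le_card_group K).lt_of_ne fun h => hK.1 (K.eq_top_of_card_eq h)
    rwa [hn, hm, Nat.pow_lt_pow_iff_right hp.out.one_lt] at hlt
  obtain ⟨L, hL, hKL⟩ := Sylow.exists_subgroup_card_pow_succ (hm ▸ pow_dvd_pow p hnm) hn
  have hLK : L ≠ K := fun h => by
    rw [h, hn] at hL
    exact n.succ_ne_self (Nat.pow_right_injective hp.out.two_le hL).symm
  have hcard : Nat.card P = p ^ n * p := by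
    rw [← card_top (G := P), ← hK.2 L (hKL.lt_of_ne hLK.symm), hL, pow_succ]
  have := K.card_mul_index
  rw [hn, hcard] at this
  exact Nat.eq_of_mul_eq_mul_left (pow_pos hp.out.pos n) this

theorem normal_of_isCoatom (hP : IsPGroup p P) {K : Subgroup P} (hK : IsCoatom K) : K.Normal :=
  have := hP.isNilpotent
  NormalizerCondition.normal_of_coatom K Group.normalizerCondition_of_isNilpotent hK

theorem pow_mem_frattini (hP : IsPGroup p P) (x : P) : x ^ p ∈ frattini P := by
  simp only [frattini, Order.radical, mem_iInf]
  intro K hK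
  have := hP.normal_of_isCoatom hK
  simpa [hP.index_eq_of_isCoatom hK] using K.pow_index_mem x

theorem commutatorElement_mem_frattini (hP : IsPGroup p P) (x y : P) :
    ⁅x, y⁆ ∈ frattini P := by
  simp only [frattini, Order.radical, mem_iInf]
  intro K hK
  have := hP.normal_of_isCoatom hK
  have : IsCyclic (P ⧸ K) := isCyclic_of_prime_card (hP.index_eq_of_isCoatom hK)
  exact Normal.quotient_commutative_iff_commutator_le.mp IsCyclic.isMulCommutative
    (commutator_mem_commutator (mem_top x) (mem_top y))

theorem map_frattini_le {A : Type*} [Group A] [Finite A] (hP : IsPGroup p P) (f : A →* P) :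
    (frattini A).map f ≤ frattini P :=
  map_le_iff_le_comap.mpr <| frattini_le_of_pow_mem_of_commutatorElement_mem _
    (fun x => by simpa using hP.pow_mem_frattini (f x))
    (fun x y => by simpa using hP.commutatorElement_mem_frattini (f x) (f y))

end

variable {G : Type*} [Group G] [Finite G]

theorem map_subtype_frattini_le_of_le (hG : IsPGroup p G) {A B : Subgroup G} (hAB : A ≤ B) :
    (frattini A).map A.subtype ≤ (frattini B).map B.subtype := by
  rw [← subtype_comp_inclusion hAB, ← map_map]
  exact map_mono ((hG.to_subgroup B).map_frattini_le _)

theorem pow_mem_map_subtype_frattini (hG : IsPGroup p G) {H : Subgroup G} {x : G} (hx : x ∈ H) :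
    x ^ p ∈ (frattini H).map H.subtype :=
  ⟨⟨x, hx⟩ ^ p, (hG.to_subgroup H).pow_mem_frattini _, rfl⟩

theorem commutator_le_map_subtype_frattini (hG : IsPGroup p G) (H : Subgroup G) :
    ⁅H, H⁆ ≤ (frattini H).map H.subtype :=
  commutator_le.mpr fun x hx y hy =>
    ⟨⁅⟨x, hx⟩, ⟨y, hy⟩⁆, (hG.to_subgroup H).commutatorElement_mem_frattini _ _, rfl⟩

end IsPGroup

namespace Subgroup

variable {G : Type*} [Group G] {N H K : Subgroup G}

theorem commutator_sup_sup_le [N.Normal] (hH : ⁅H, H⁆ ≤ N) (hHK : ⁅H, K⁆ ≤ N)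
    (hK : ⁅K, K⁆ ≤ N) : ⁅H ⊔ K, H ⊔ K⁆ ≤ N := by
  rw [← QuotientGroup.ker_mk' N, ← map_eq_bot_iff] at *
  simp only [map_commutator, map_sup, commutator_eq_bot_iff_le_centralizer] at *
  exact sup_le (le_centralizer_iff.mpr (sup_le hH (le_centralizer_iff.mp hHK)))
    (le_centralizer_iff.mpr (sup_le hHK hK))

theorem commutator_subgroupOf_le {L : Subgroup G} (h : ⁅H, K⁆ ≤ N) :
    ⁅H.subgroupOf L, K.subgroupOf L⁆ ≤ N.subgroupOf L :=
  commutator_le.mpr fun x hx y hy => by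
    simpa [mem_subgroupOf, commutatorElement_def] using h (commutator_mem_commutator hx hy)

theorem commutator_sup_sup_le_of_le_normalizer (hN : H ⊔ K ≤ normalizer (N : Set G))
    (hH : ⁅H, H⁆ ≤ N) (hHK : ⁅H, K⁆ ≤ N) (hK : ⁅K, K⁆ ≤ N) : ⁅H ⊔ K, H ⊔ K⁆ ≤ N := by
  have := normal_subgroupOf_of_le_normalizer hN
  have key := commutator_sup_sup_le (commutator_subgroupOf_le (L := H ⊔ K) hH)
    (commutator_subgroupOf_le hHK) (commutator_subgroupOf_le hK)
  rw [← subgroupOf_sup le_sup_left le_sup_right, subgroupOf_self] at key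
  rw [← map_subtype_commutator, map_le_iff_le_comap]
  exact key

theorem mul_pow_mem_of_mem_normalizer {x y : G} (hx : x ∈ normalizer (N : Set G))
    (hy : y ∈ normalizer (N : Set G)) (hxy : ⁅x, y⁆ ∈ N) {n : ℕ} (hxn : x ^ n ∈ N)
    (hyn : y ^ n ∈ N) : (x * y) ^ n ∈ N := by
  let L := normalizer (N : Set G)
  let φ := QuotientGroup.mk' (N.subgroupOf L)
  have hφ : ∀ z : L, φ z = 1 ↔ (z : G) ∈ N := fun z =>
    (QuotientGroup.eq_one_iff z).trans mem_subgroupOf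
  have hcomm : Commute (φ ⟨x, hx⟩) (φ ⟨y, hy⟩) := by
    rw [← commutatorElement_eq_one_iff_commute, ← map_commutatorElement, hφ]
    simpa [commutatorElement_def] using hxy
  have hpow : ∀ z : L, (z : G) ^ n ∈ N → φ z ^ n = 1 := fun z hz => by
    rw [← map_pow, hφ]
    simpa using hz
  have := (hφ ((⟨x, hx⟩ * ⟨y, hy⟩) ^ n)).mp <| by
    rw [map_pow, map_mul, hcomm.mul_pow, hpow _ hxn, hpow _ hyn, one_mul]
  simpa using this

theorem pow_mem_sup_of_le_normalizer (hKH : K ≤ normalizer (H : Set G))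
    (hN : H ⊔ K ≤ normalizer (N : Set G)) (hHK : ⁅H, K⁆ ≤ N) {n : ℕ}
    (hH : ∀ x ∈ H, x ^ n ∈ N) (hK : ∀ x ∈ K, x ^ n ∈ N) : ∀ x ∈ H ⊔ K, x ^ n ∈ N := by
  intro x hx
  rw [← SetLike.mem_coe, coe_mul_of_right_le_normalizer_left H K hKH] at hx
  obtain ⟨h, hh, k, hk, rfl⟩ := hx
  exact mul_pow_mem_of_mem_normalizer (hN (mem_sup_left hh)) (hN (mem_sup_right hk))
    (hHK (commutator_mem_commutator hh hk)) (hH h hh) (hK k hk)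

theorem map_subtype_frattini_le_of_le_normalizer [Finite G] {L : Subgroup G}
    (hL : L ≤ normalizer (N : Set G)) (hpow : ∀ x ∈ L, x ^ p ∈ N)
    (hcomm : ∀ x ∈ L, ∀ y ∈ L, ⁅x, y⁆ ∈ N) : (frattini L).map L.subtype ≤ N := by
  have := normal_subgroupOf_of_le_normalizer hL
  refine map_le_iff_le_comap.mpr <| frattini_le_of_pow_mem_of_commutatorElement_mem (p := p)
    (N.subgroupOf L) (fun x => ?_) (fun x y => ?_)
  · simpa [mem_subgroupOf] using hpow x x.2
  · simpa [mem_subgroupOf, commutatorElement_def] using hcomm x x.2 y y.2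

end Subgroup

/-- Let `G` be a finite `p`-group, `R`, `S` subgroups, and
`T = Φ(R)·Φ(S)·⁅R,S⁆` the subgroup generated by the Frattini subgroups of `R` and `S`
and the commutator `⁅R,S⁆`.  If `T ≤ R ∩ S` then: (1) `R` and `S` normalize each
other, so `R·S` is a subgroup normalizing both; (2) `T` is the Frattini subgroup of
`R·S`; (3) the quotient `(R·S)/T` is elementary abelian and the images of `R` and `S`
in it centralize each other. -/
theorem frattini_mul_of_commutator_le
    {p : ℕ} [Fact p.Prime] {G : Type*} [Group G] [Finite G] (hG : IsPGroup p G)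
    (R S T : Subgroup G)
    (hT : T = (frattini R).map R.subtype ⊔ (frattini S).map S.subtype ⊔ ⁅R, S⁆)
    (hTRS : T ≤ R ⊓ S) :
    -- (1) `R` and `S` normalize each other, `R·S = R ⊔ S` as sets, and `R·S`
    -- normalizes both `R` and `S`
    (R ≤ Subgroup.normalizer (S : Set G) ∧ S ≤ Subgroup.normalizer (R : Set G) ∧
      (R : Set G) * (S : Set G) = ((R ⊔ S : Subgroup G) : Set G) ∧
      R ⊔ S ≤ Subgroup.normalizer (R : Set G) ∧ R ⊔ S ≤ Subgroup.normalizer (S : Set G)) ∧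
    -- (2) `T` is the Frattini subgroup of `R·S`
    T = (frattini ↥(R ⊔ S)).map (R ⊔ S).subtype ∧
    -- (3) `(R·S)/T` is elementary abelian, and the images of `R` and `S` in it
    -- centralize each other
    ((T.subgroupOf (R ⊔ S)).Normal ∧
      (∀ x ∈ R ⊔ S, x ^ p ∈ T) ∧
      (∀ x ∈ R ⊔ S, ∀ y ∈ R ⊔ S, ⁅x, y⁆ ∈ T) ∧
      (∀ r ∈ R, ∀ s ∈ S, ⁅r, s⁆ ∈ T)) := by
  have hRS : ⁅R, S⁆ ≤ T := hT ▸ le_sup_right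
  have hΦR : (frattini R).map R.subtype ≤ T := hT ▸ le_sup_left.trans le_sup_left
  have hΦS : (frattini S).map S.subtype ≤ T := hT ▸ le_sup_right.trans le_sup_left
  have hTR : T ≤ R := hTRS.trans inf_le_left
  have hTS : T ≤ S := hTRS.trans inf_le_right
  have hRnS : R ≤ normalizer (S : Set G) :=
    le_normalizer_iff_commutator_le_right.mpr (hRS.trans hTS)
  have hSnR : S ≤ normalizer (R : Set G) :=
    le_normalizer_iff_commutator_le_left.mpr (hRS.trans hTR)
  have hMnT : R ⊔ S ≤ normalizer (T : Set G) := sup_le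
    (le_normalizer_iff_commutator_le_right.mpr ((commutator_mono le_rfl hTS).trans hRS))
    (le_normalizer_iff_commutator_le_left.mpr ((commutator_mono hTR le_rfl).trans hRS))
  have hcomm : ∀ x ∈ R ⊔ S, ∀ y ∈ R ⊔ S, ⁅x, y⁆ ∈ T := fun x hx y hy =>
    commutator_sup_sup_le_of_le_normalizer hMnT
      ((hG.commutator_le_map_subtype_frattini R).trans hΦR) hRS
      ((hG.commutator_le_map_subtype_frattini S).trans hΦS) (commutator_mem_commutator hx hy)
  have hpow : ∀ x ∈ R ⊔ S, x ^ p ∈ T := pow_mem_sup_of_le_normalizer hSnR hMnT hRS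
    (fun _ hr => hΦR (hG.pow_mem_map_subtype_frattini hr))
    (fun _ hs => hΦS (hG.pow_mem_map_subtype_frattini hs))
  refine ⟨⟨hRnS, hSnR, (coe_mul_of_right_le_normalizer_left R S hSnR).symm,
      sup_le le_normalizer hSnR, sup_le hRnS le_normalizer⟩,
    le_antisymm ?_ (map_subtype_frattini_le_of_le_normalizer hMnT hpow hcomm),
    normal_subgroupOf_of_le_normalizer hMnT, hpow, hcomm,
    fun r hr s hs => hRS (commutator_mem_commutator hr hs)⟩
  rw [hT]
  exact sup_le (sup_le (hG.map_subtype_frattini_le_of_le le_sup_left)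
      (hG.map_subtype_frattini_le_of_le le_sup_right))
    ((commutator_mono le_sup_left le_sup_right).trans (hG.commutator_le_map_subtype_frattini _))
end

section
/- Let k be a field of characteristic 2 and let G be an F₂-vector space of finite dimension m with an ordered basis b₁, …, b_m; write B = {b₁,…,b_m}. For x ∈ G∖{0} let d(x) be the least index i such that x lies in the span of b₁,…,b_i. Let Ẽ be the quotient of the free associative unital k-algebra on generators γ_x, one for each x ∈ G∖{0}, by the two-sided ideal generated by the elements Σ_{x ∈ G∖H} γ_x for every hyperplane H of G (i.e. every F₂-subspace of codimension 1), together with the commutators [γ_x + γ_y, γ_{x+y}] = (γ_x+γ_y)γ_{x+y} + γ_{x+y}(γ_x+γ_y) for all distinct x, y ∈ G∖{0}. Then Ẽ is spanned as a k-vector space by the 'special ordered monomials': the products γ_{x₁}γ_{x₂}⋯γ_{x_n} (n ≥ 0, the empty product being 1) with every x_i ∈ G∖(B∪{0}) and d(x₁) ≤ d(x₂) ≤ ⋯ ≤ d(x_n). -/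
open scoped Classical

/-- `dB b x` is the least `i` such that `x` lies in the span of the first `i`
vectors `b 0, …, b (i-1)` of the basis `b`. -/
noncomputable def dB {G : Type*} [AddCommGroup G] [Module (ZMod 2) G] {m : ℕ}
    (b : Module.Basis (Fin m) (ZMod 2) G) (x : G) : ℕ :=
  sInf {i : ℕ | x ∈ Submodule.span (ZMod 2) {y : G | ∃ j : Fin m, (j : ℕ) < i ∧ y = b j}}

/-- The defining relations of the algebra `Ẽ`: for every hyperplane `H` of `G` the
relation `∑_{x ∉ H} γ_x = 0`, and for all distinct nonzero `x`, `y` the relation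
`[γ_x + γ_y, γ_{x+y}] = 0` (where `[a,b] = ab + ba`). -/
inductive ExtRel (k : Type*) [Field k] (G : Type*) [AddCommGroup G] [Module (ZMod 2) G]
    [Fintype G] :
    FreeAlgebra k {x : G // x ≠ 0} → FreeAlgebra k {x : G // x ≠ 0} → Prop
  | hyperplane (H : Submodule (ZMod 2) G)
      (hH : Module.finrank (ZMod 2) H + 1 = Module.finrank (ZMod 2) G) :
      ExtRel k G
        (∑ x ∈ Finset.univ.filter (fun x : {x : G // x ≠ 0} => (x : G) ∉ H),
          FreeAlgebra.ι k x) 0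
  | comm (x y : {x : G // x ≠ 0}) (hxy : x ≠ y) (hs : (x : G) + (y : G) ≠ 0) :
      ExtRel k G
        ((FreeAlgebra.ι k x + FreeAlgebra.ι k y) * FreeAlgebra.ι k ⟨(x : G) + y, hs⟩ +
          FreeAlgebra.ι k ⟨(x : G) + y, hs⟩ * (FreeAlgebra.ι k x + FreeAlgebra.ι k y)) 0

/-!
`Ẽ` is spanned by the words in the generators, and the relations give two rewriting rules for
words. The hyperplane relation for the coordinate hyperplane `H_i` expresses `γ_{b_i}` through the
`γ_x` with `x ∉ H_i`, all of which satisfy `d(x) ≥ d(b_i)`; the commutator relation for `w = u + z`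
and `z` expresses `γ_u γ_z`, when `d(z) < d(u)`, through `γ_z γ_u`, `γ_w γ_u` and `γ_u γ_w`, where
`d(w) = d(u)`. Each rule either raises the total depth of a word, or keeps it while removing a basis
letter or an inversion, so rewriting terminates, and it can only stop at special ordered monomials.
-/

open Submodule

namespace Module.Basis

variable {R M : Type*} [Semiring R] [AddCommMonoid M] [Module R M] {m : ℕ}

def spanBelow (b : Basis (Fin m) R M) (i : ℕ) : Submodule R M :=
  span R {y | ∃ j : Fin m, (j : ℕ) < i ∧ y = b j}

theorem mem_spanBelow_iff {b : Basis (Fin m) R M} {i : ℕ} {x : M} :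
    x ∈ b.spanBelow i ↔ ∀ j, b.repr x j ≠ 0 → (j : ℕ) < i := by
  have hset : {y | ∃ j : Fin m, (j : ℕ) < i ∧ y = b j} = b '' {j | (j : ℕ) < i} := by
    ext y
    simp [eq_comm]
  rw [spanBelow, hset, b.mem_span_image]
  simp [Set.subset_def]

end Module.Basis

section Depth

variable {G : Type*} [AddCommGroup G] [Module (ZMod 2) G] {m : ℕ}
  (b : Module.Basis (Fin m) (ZMod 2) G)

theorem dB_le_iff {x : G} {i : ℕ} : dB b x ≤ i ↔ x ∈ b.spanBelow i := by
  refine ⟨fun h => ?_, fun h => Nat.sInf_le h⟩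
  have hmono : Monotone fun i => x ∈ b.spanBelow i := fun _ _ hi hx =>
    Module.Basis.mem_spanBelow_iff.2 fun j hj =>
      (Module.Basis.mem_spanBelow_iff.1 hx j hj).trans_le hi
  exact hmono h (Nat.sInf_mem (s := {i | x ∈ b.spanBelow i})
    ⟨m, Module.Basis.mem_spanBelow_iff.2 fun j _ => j.2⟩)

theorem dB_le (x : G) : dB b x ≤ m :=
  (dB_le_iff b).2 (Module.Basis.mem_spanBelow_iff.2 fun j _ => j.2)

theorem lt_dB_of_repr_ne_zero {x : G} {j : Fin m} (h : b.repr x j ≠ 0) : (j : ℕ) < dB b x :=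
  Module.Basis.mem_spanBelow_iff.1 ((dB_le_iff b).1 le_rfl) j h

theorem dB_basis (i : Fin m) : dB b (b i) = i + 1 := by
  refine le_antisymm ((dB_le_iff b).2 (Module.Basis.mem_spanBelow_iff.2 fun j hj => ?_))
    (lt_dB_of_repr_ne_zero b (by simp))
  rw [b.repr_self, Finsupp.single_apply_ne_zero] at hj
  simp [hj.1]

theorem dB_add_of_lt {x z : G} (h : dB b z < dB b x) : dB b (x + z) = dB b x := by
  refine le_antisymm ((dB_le_iff b).2 (add_mem ((dB_le_iff b).1 le_rfl) ((dB_le_iff b).1 h.le)))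
    (not_lt.1 fun hlt => ?_)
  have hx : x ∈ b.spanBelow (max (dB b (x + z)) (dB b z)) :=
    (Submodule.add_mem_iff_left _ ((dB_le_iff b).1 (le_max_right _ _))).1
      ((dB_le_iff b).1 (le_max_left _ _))
  exact ((dB_le_iff b).2 hx).not_gt (max_lt hlt h)

end Depth

section CostKey

variable {α : Type*} (c : α → ℕ)

def suffixCost : List α → ℕ
  | [] => 0
  | _ :: t => (t.map c).sum + suffixCost t

theorem suffixCost_append (l₁ l₂ : List α) :
    suffixCost c (l₁ ++ l₂) = suffixCost c l₁ + l₁.length * (l₂.map c).sum + suffixCost c l₂ := by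
  induction l₁ with
  | nil => simp [suffixCost]
  | cons _ t ih =>
    simp only [List.cons_append, suffixCost, ih, List.map_append, List.sum_append,
      List.length_cons]
    ring

def costKey (l : List α) : ℕ ×ₗ ℕ := toLex ((l.map c).sum, suffixCost c l)

theorem costKey_lt_of_sum_lt {l₁ l₂ : List α} (A B : List α)
    (h : (l₁.map c).sum < (l₂.map c).sum) : costKey c (A ++ l₁ ++ B) < costKey c (A ++ l₂ ++ B) :=
  Prod.Lex.toLex_lt_toLex.2 (Or.inl (by simp only [List.map_append, List.sum_append]; omega))

theorem costKey_swap_lt {x y : α} (A B : List α) (h : c x < c y) :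
    costKey c (A ++ [y, x] ++ B) < costKey c (A ++ [x, y] ++ B) := by
  refine Prod.Lex.toLex_lt_toLex.2 (Or.inr ⟨?_, ?_⟩)
  · simp only [List.map_append, List.map_cons, List.map_nil, List.sum_append, List.sum_cons,
      List.sum_nil]
    omega
  · simp only [List.append_assoc, List.cons_append, List.nil_append, suffixCost_append,
      List.map_cons, List.sum_cons, suffixCost]
    linarith

end CostKey

section Algebra

variable (k : Type*) [Field k] (G : Type*) [AddCommGroup G] [Module (ZMod 2) G] [Fintype G]

local notation "X" => {x : G // x ≠ 0}

noncomputable def gen (x : X) : RingQuot (ExtRel k G) :=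
  RingQuot.mkAlgHom k (ExtRel k G) (FreeAlgebra.ι k x)

noncomputable def word (l : List X) : RingQuot (ExtRel k G) :=
  (l.map (gen k G)).prod

theorem span_range_word : span k (Set.range (word k G)) = ⊤ := by
  have hadjoin : Algebra.adjoin k (Set.range (gen k G)) = ⊤ := by
    rw [show gen k G = RingQuot.mkAlgHom k (ExtRel k G) ∘ FreeAlgebra.ι k from rfl,
      Set.range_comp, Algebra.adjoin_image, FreeAlgebra.adjoin_range_ι, Algebra.map_top,
      AlgHom.range_eq_top]
    exact RingQuot.mkAlgHom_surjective k _
  have hrange : Set.range (word k G) = MonoidHom.mrange (FreeMonoid.lift (gen k G)) := by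
    ext a
    constructor
    · rintro ⟨l, rfl⟩
      exact ⟨FreeMonoid.ofList l, FreeMonoid.lift_ofList _ _⟩
    · rintro ⟨w, rfl⟩
      exact ⟨w.toList, (FreeMonoid.lift_apply _ _).symm⟩
  rw [hrange, FreeMonoid.mrange_lift, ← Algebra.adjoin_eq_span, hadjoin, Algebra.top_toSubmodule]

variable {k G}

theorem word_append (l₁ l₂ : List X) : word k G (l₁ ++ l₂) = word k G l₁ * word k G l₂ := by
  simp [word]

theorem word_singleton (x : X) : word k G [x] = gen k G x := by
  simp [word]

theorem word_append_mem_span {c : List X} {C : Set (List X)}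
    (h : word k G c ∈ span k (word k G '' C)) (A B : List X) :
    word k G (A ++ c ++ B) ∈ span k ((fun c' => word k G (A ++ c' ++ B)) '' C) := by
  have := apply_mem_span_image_of_mem_span (LinearMap.mulLeftRight k (word k G A, word k G B)) h
  simpa [Set.image_image, word_append, mul_assoc] using this

variable {m : ℕ} (b : Module.Basis (Fin m) (ZMod 2) G)

theorem sum_gen_repr_ne_zero_eq_zero (i : Fin m) :
    ∑ x ∈ Finset.univ.filter (fun x : X => b.repr x i ≠ 0), gen k G x = 0 := by
  have hcoord : b.coord i ≠ 0 := fun h => by simpa using LinearMap.congr_fun h (b i)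
  have hrel := RingQuot.mkAlgHom_rel k (ExtRel.hyperplane (k := k) (LinearMap.ker (b.coord i))
    (Module.Dual.finrank_ker_add_one_of_ne_zero hcoord))
  simpa [map_sum, gen] using hrel

theorem word_basis_mem_span {y : X} {i : Fin m} (hy : (y : G) = b i) :
    word k G [y] ∈ span k (word k G '' {c | ∃ x : X, b.repr x i ≠ 0 ∧ x ≠ y ∧ c = [x]}) := by
  have hmem : y ∈ Finset.univ.filter (fun x : X => b.repr x i ≠ 0) := by simp [hy]
  have hsum := sum_gen_repr_ne_zero_eq_zero (k := k) b i
  rw [← Finset.add_sum_erase _ _ hmem] at hsum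
  rw [word_singleton, eq_neg_of_add_eq_zero_left hsum]
  refine neg_mem (sum_mem fun x hx => subset_span ⟨[x], ⟨x, ?_, ?_, rfl⟩, word_singleton x⟩)
  · exact (Finset.mem_filter.1 (Finset.mem_of_mem_erase hx)).2
  · exact Finset.ne_of_mem_erase hx

theorem word_pair_mem_span (u z : X) (hw : (u : G) + z ≠ 0) :
    word k G [u, z] ∈
      span k (word k G '' {[z, u], [⟨u + z, hw⟩, u], [u, ⟨u + z, hw⟩]}) := by
  set w : X := ⟨u + z, hw⟩
  have hwz : w ≠ z := fun h => u.2 (by simpa [w] using congrArg Subtype.val h)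
  have hs : (w : G) + z ≠ 0 := by simpa [w, add_assoc, ZModModule.add_self] using u.2
  have hu : (⟨(w : G) + z, hs⟩ : X) = u :=
    Subtype.ext (by simp [w, add_assoc, ZModModule.add_self])
  have hrel := RingQuot.mkAlgHom_rel k (ExtRel.comm (k := k) w z hwz hs)
  rw [hu] at hrel
  simp only [map_add, map_mul, map_zero] at hrel
  have hsum : word k G [u, z] + (word k G [z, u] + word k G [w, u] + word k G [u, w]) = 0 := by
    rw [← hrel]
    simp only [word, List.map_cons, List.map_nil, List.prod_cons, List.prod_nil, mul_one, gen]
    noncomm_ring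
  rw [eq_neg_of_add_eq_zero_left hsum]
  exact neg_mem (add_mem (add_mem (subset_span ⟨_, by simp, rfl⟩) (subset_span ⟨_, by simp, rfl⟩))
    (subset_span ⟨_, by simp, rfl⟩))

end Algebra

section LetterCost

variable {G : Type*} [AddCommGroup G] [Module (ZMod 2) G] {m : ℕ}
  (b : Module.Basis (Fin m) (ZMod 2) G)

local notation "X" => {x : G // x ≠ 0}

-- A basis letter costs more than the non-basis letters of the same depth but less than any
-- letter of smaller depth.
noncomputable def letterCost (x : X) : ℕ :=
  2 * (m - dB b x) + if (x : G) ∈ Set.range b then 1 else 0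

def IsSpecial (l : List X) : Prop :=
  (∀ x ∈ l, (x : G) ∉ Set.range b) ∧ l.IsChain fun x y : X => dB b x ≤ dB b y

theorem letterCost_lt_of_dB_lt {x y : X} (h : dB b y < dB b x) :
    letterCost b x < letterCost b y := by
  have := dB_le b x
  unfold letterCost
  split_ifs <;> omega

theorem letterCost_lt_of_repr_ne_zero {x y : X} {i : Fin m} (hy : (y : G) = b i)
    (hx : b.repr x i ≠ 0) (hxy : x ≠ y) : letterCost b x < letterCost b y := by
  have hdy : dB b y = i + 1 := hy ▸ dB_basis b i
  rcases Nat.lt_or_eq_of_le (lt_dB_of_repr_ne_zero b hx) with hlt | heq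
  · exact letterCost_lt_of_dB_lt b (by omega)
  · have hxb : (x : G) ∉ Set.range b := by
      rintro ⟨j, hj⟩
      rw [← hj, b.repr_self, Finsupp.single_apply_ne_zero] at hx
      exact hxy (Subtype.ext (by rw [← hj, hy, hx.1]))
    rw [letterCost, letterCost, if_neg hxb, if_pos ⟨i, hy.symm⟩]
    omega

end LetterCost

section Rewriting

variable {k : Type*} [Field k] {G : Type*} [AddCommGroup G] [Module (ZMod 2) G] [Fintype G]
  {m : ℕ} (b : Module.Basis (Fin m) (ZMod 2) G)

local notation "X" => {x : G // x ≠ 0}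

theorem word_mem_span_isSpecial (l : List X) :
    word k G l ∈ span k (word k G '' {l | IsSpecial b l}) := by
  induction l using (InvImage.wf (costKey (letterCost b)) wellFounded_lt).induction with
  | _ l ih =>
  have of_rewrite : ∀ (A c B : List X) (C : Set (List X)), l = A ++ c ++ B →
      word k G c ∈ span k (word k G '' C) →
      (∀ c' ∈ C, costKey (letterCost b) (A ++ c' ++ B) < costKey (letterCost b) (A ++ c ++ B)) →
      word k G l ∈ span k (word k G '' {l | IsSpecial b l}) := by
    rintro A c B C rfl hc hlt
    refine span_le.2 ?_ (word_append_mem_span hc A B)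
    rintro _ ⟨c', hc', rfl⟩
    exact ih _ (hlt c' hc')
  by_cases hchain : l.IsChain fun x y : X => dB b x ≤ dB b y
  · by_cases hbasis : ∀ x ∈ l, (x : G) ∉ Set.range b
    · exact subset_span ⟨l, ⟨hbasis, hchain⟩, rfl⟩
    push Not at hbasis
    obtain ⟨y, hyl, i, hy⟩ := hbasis
    obtain ⟨A, B, rfl⟩ := List.append_of_mem hyl
    refine of_rewrite A [y] B _ (by simp) (word_basis_mem_span b hy.symm) ?_
    rintro _ ⟨x, hx, hxy, rfl⟩
    exact costKey_lt_of_sum_lt _ A B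
      (by simpa using letterCost_lt_of_repr_ne_zero b hy.symm hx hxy)
  rw [List.isChain_iff_forall_rel_of_append_cons_cons] at hchain
  push Not at hchain
  obtain ⟨u, z, A, B, rfl, hzu⟩ := hchain
  have hw : (u : G) + z ≠ 0 := fun h =>
    hzu.ne (by rw [eq_neg_of_add_eq_zero_left h, ZModModule.neg_eq_self])
  have hdw : dB b ((u : G) + z) = dB b u := dB_add_of_lt b hzu
  refine of_rewrite A [u, z] B _ (by simp) (word_pair_mem_span u z hw) ?_
  have hwz : letterCost b ⟨u + z, hw⟩ < letterCost b z :=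
    letterCost_lt_of_dB_lt b (hzu.trans_eq hdw.symm)
  rintro c' (rfl | rfl | rfl)
  · exact costKey_swap_lt _ A B (letterCost_lt_of_dB_lt b hzu)
  all_goals
    refine costKey_lt_of_sum_lt _ A B ?_
    simp only [List.map_cons, List.map_nil, List.sum_cons, List.sum_nil]
    omega

theorem IsSpecial.mem_specialOrderedMonomials {l : List X} (hl : IsSpecial b l) :
    ∃ (n : ℕ) (x : Fin n → {g : G // g ≠ 0}),
      (∀ i, (x i : G) ∉ Set.range ⇑b) ∧
      (∀ i j : Fin n, i ≤ j → dB b (x i : G) ≤ dB b (x j : G)) ∧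
      word k G l = RingQuot.mkAlgHom k (ExtRel k G)
        ((List.ofFn fun i => FreeAlgebra.ι k (x i)).prod) := by
  refine ⟨l.length, fun i => l[i], fun i => hl.1 _ (List.getElem_mem _), fun i j hij => ?_, ?_⟩
  · have hpair : (l.map fun x : X => dB b x).Pairwise (· ≤ ·) :=
      List.isChain_iff_pairwise.1 ((List.isChain_map fun x : X => dB b x).2 hl.2)
    rcases hij.lt_or_eq with hlt | rfl
    · simpa using List.pairwise_iff_getElem.1 hpair i j (by simp) (by simp) hlt
    · exact le_rfl
  · simp only [word, Fin.getElem_fin, List.ofFn_getElem_eq_map, map_list_prod, List.map_map]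
    rfl

end Rewriting

theorem span_specialOrderedMonomials_general (k : Type*) [Field k]
    (G : Type*) [AddCommGroup G] [Module (ZMod 2) G] [Fintype G]
    {m : ℕ} (b : Module.Basis (Fin m) (ZMod 2) G) :
    Submodule.span k
      {a : RingQuot (ExtRel k G) | ∃ (n : ℕ) (x : Fin n → {g : G // g ≠ 0}),
        (∀ i, (x i : G) ∉ Set.range ⇑b) ∧
        (∀ i j : Fin n, i ≤ j → dB b (x i : G) ≤ dB b (x j : G)) ∧
        a = RingQuot.mkAlgHom k (ExtRel k G)
          ((List.ofFn fun i => FreeAlgebra.ι k (x i)).prod)} = ⊤ := by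
  refine eq_top_iff.2 ((span_range_word k G).ge.trans (span_le.2 ?_))
  rintro _ ⟨l, rfl⟩
  refine span_mono ?_ (word_mem_span_isSpecial b l)
  rintro _ ⟨l, hl, rfl⟩
  exact hl.mem_specialOrderedMonomials b

/-- The algebra `Ẽ` (the quotient of the free algebra on the `γ_x`,
`x ∈ G∖{0}` by the hyperplane and commutator relations) is spanned over `k` by the
special ordered monomials `γ_{x₁}⋯γ_{x_n}` with all `x_i ∈ G∖(B∪{0})` and
`d(x₁) ≤ ⋯ ≤ d(x_n)`. -/
theorem span_specialOrderedMonomials (k : Type*) [Field k] [CharP k 2]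
    (G : Type*) [AddCommGroup G] [Module (ZMod 2) G] [Fintype G]
    {m : ℕ} (b : Module.Basis (Fin m) (ZMod 2) G) :
    Submodule.span k
      {a : RingQuot (ExtRel k G) | ∃ (n : ℕ) (x : Fin n → {g : G // g ≠ 0}),
        (∀ i, (x i : G) ∉ Set.range ⇑b) ∧
        (∀ i j : Fin n, i ≤ j → dB b (x i : G) ≤ dB b (x j : G)) ∧
        a = RingQuot.mkAlgHom k (ExtRel k G)
          ((List.ofFn fun i => FreeAlgebra.ι k (x i)).prod)} = ⊤ :=
  span_specialOrderedMonomials_general k G b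
end

section
/- Let p be a prime, Q a vector space of dimension n over the field F_p, and fix a complete flag 0 = H_0 < H_1 < ⋯ < H_n = Q (dim H_i = i). Then the number of complete flags Q = X_0 > X_1 > ⋯ > X_{n−1} > X_n = 0 (dim X_i = n−i) such that X_i ⊕ H_i = Q for all 0 ≤ i ≤ n equals p^{n(n−1)/2}, i.e. there are exactly p^{\binom{n}{2}} complete flags opposite to a given complete flag of Q. -/
/-!
Fix vectors `e j ∈ H (j+1) \ H j`. For any choice of `h j ∈ H j`, the family `v = e + h` is
again adapted to the flag, hence linearly independent with `H i = span {v j | j < i}`, so the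
tail spans `X i = span {v j | i ≤ j}` form an opposite flag. Conversely, since `X j ⊕ H j = Q`,
an opposite flag `X` determines `h j ∈ H j` uniquely by `e j + h j ∈ X j`, and then
`X i = span {v j | i ≤ j}` by counting dimensions. So opposite flags are in bijection with
`∏ j, H j`, which has `∏ j, p ^ j = p ^ (n(n-1)/2)` elements.
-/

open Module Submodule Finset

theorem Fin.card_filter_val_lt_val {n : ℕ} (i : Fin (n + 1)) :
    #{j : Fin n | (j : ℕ) < i} = i := by
  rw [Fin.card_filter_val_lt]; omega

theorem Fin.card_filter_val_le_val {n : ℕ} (i : Fin (n + 1)) :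
    #{j : Fin n | (i : ℕ) ≤ j} = n - i := by
  have := card_filter_add_card_filter_not (s := univ) (fun j : Fin n => (j : ℕ) < i)
  simp only [Fin.card_filter_val_lt, not_lt, card_univ, Fintype.card_fin] at this
  omega

section Ring

variable {R M : Type*} [Ring R] [AddCommGroup M] [Module R M]

theorem Submodule.exists_add_mem_of_codisjoint {A B : Submodule R M} (h : Codisjoint A B) (x : M) :
    ∃ b ∈ B, x + b ∈ A := by
  obtain ⟨a, b, ha, hb, rfl⟩ := codisjoint_iff_exists_add_eq.mp h x
  exact ⟨-b, neg_mem hb, by simpa using ha⟩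

theorem Submodule.eq_of_add_mem_of_disjoint {A B : Submodule R M} (h : Disjoint A B) {x b b' : M}
    (hb : b ∈ B) (hb' : b' ∈ B) (hxb : x + b ∈ A) (hxb' : x + b' ∈ A) : b = b' := by
  rw [← sub_eq_zero]
  refine disjoint_def.mp h _ ?_ (sub_mem hb hb')
  simpa using sub_mem hxb hxb'

end Ring

section DivisionRing

variable {K V : Type*} [DivisionRing K] [AddCommGroup V] [Module K V]

theorem LinearIndependent.finrank_span_image_finset {ι : Type*} {v : ι → V}
    (hv : LinearIndependent K v) (s : Finset ι) : finrank K (span K (v '' s)) = #s := by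
  rw [Set.image_eq_range]
  exact (finrank_span_eq_card (hv.comp _ Subtype.val_injective)).trans (by simp)

theorem linearIndependent_of_mem_of_notMem {m : ℕ} (W : Fin m → Submodule K V) {v : Fin m → V}
    (hmem : ∀ k j, k < j → v k ∈ W j) (hnotMem : ∀ j, v j ∉ W j) : LinearIndependent K v := by
  induction m with
  | zero => exact linearIndependent_empty_type
  | succ m ih =>
    rw [← Fin.snoc_init_self v, linearIndependent_finSnoc]
    refine ⟨ih (fun k => W k.castSucc) (fun k j h => hmem _ _ (by simpa using h))
        (fun j => hnotMem _), fun hspan => hnotMem (Fin.last m) ?_⟩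
    refine span_le.mpr ?_ hspan
    rintro _ ⟨k, rfl⟩
    exact hmem _ _ (Fin.castSucc_lt_last k)

variable {n : ℕ} {H : Fin (n + 1) → Submodule K V}

def IsAdaptedTo (H : Fin (n + 1) → Submodule K V) (v : Fin n → V) : Prop :=
  ∀ j, v j ∈ H j.succ ∧ v j ∉ H j.castSucc

theorem exists_isAdaptedTo (hH : Monotone H) (hdim : ∀ i, finrank K (H i) = i) :
    ∃ v : Fin n → V, IsAdaptedTo H v := by
  have hlt (j : Fin n) : H j.castSucc < H j.succ := by
    refine (hH (Fin.castSucc_le_succ j)).lt_of_ne fun h => ?_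
    have := hdim j.castSucc
    rw [h, hdim] at this
    simp at this
  choose v hv using fun j => SetLike.exists_of_lt (hlt j)
  exact ⟨v, hv⟩

namespace IsAdaptedTo

variable {v : Fin n → V}

theorem add (hH : Monotone H) (hv : IsAdaptedTo H v) {g : Fin n → V}
    (hg : ∀ j, g j ∈ H j.castSucc) : IsAdaptedTo H (v + g) := fun j =>
  ⟨add_mem (hv j).1 (hH (Fin.castSucc_le_succ j) (hg j)),
    fun h => (hv j).2 (by simpa using sub_mem h (hg j))⟩

theorem mem (hH : Monotone H) (hv : IsAdaptedTo H v) {i : Fin (n + 1)} {j : Fin n}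
    (hj : (j : ℕ) < i) : v j ∈ H i :=
  hH (by rw [Fin.le_def, Fin.val_succ]; omega) (hv j).1

theorem linearIndependent (hH : Monotone H) (hv : IsAdaptedTo H v) : LinearIndependent K v :=
  linearIndependent_of_mem_of_notMem (fun j => H j.castSucc)
    (fun _ _ hkj => hv.mem hH hkj) fun j => (hv j).2

theorem span_image_eq [FiniteDimensional K V] (hH : Monotone H) (hdim : ∀ i, finrank K (H i) = i)
    (hv : IsAdaptedTo H v) (i : Fin (n + 1)) :
    span K (v '' ({j | (j : ℕ) < i} : Finset (Fin n))) = H i := by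
  refine eq_of_le_of_finrank_le (span_le.mpr ?_) ?_
  · rintro _ ⟨j, hj, rfl⟩
    exact hv.mem hH (by simpa using hj)
  · rw [hdim, (hv.linearIndependent hH).finrank_span_image_finset,
      Fin.card_filter_val_lt_val]

end IsAdaptedTo

variable (K) in
def coflag (v : Fin n → V) (i : Fin (n + 1)) : Submodule K V :=
  span K (v '' ({j | (i : ℕ) ≤ j} : Finset (Fin n)))

theorem apply_mem_coflag (v : Fin n → V) {i : Fin (n + 1)} {j : Fin n} (hij : (i : ℕ) ≤ j) :
    v j ∈ coflag K v i :=
  subset_span ⟨j, by simpa using hij, rfl⟩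

theorem coflag_le_iff {v : Fin n → V} {i : Fin (n + 1)} {W : Submodule K V} :
    coflag K v i ≤ W ↔ ∀ j : Fin n, (i : ℕ) ≤ j → v j ∈ W := by
  simp [coflag, span_le, Set.subset_def]

theorem coflag_antitone (v : Fin n → V) : Antitone (coflag K v) := fun _ _ hii' =>
  coflag_le_iff.mpr fun _ hj => apply_mem_coflag v ((Fin.le_def.mp hii').trans hj)

theorem finrank_coflag {v : Fin n → V} (hv : LinearIndependent K v) (i : Fin (n + 1)) :
    finrank K (coflag K v i) = n - i := by
  rw [coflag, hv.finrank_span_image_finset, Fin.card_filter_val_le_val]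

def IsOppositeFlag (H X : Fin (n + 1) → Submodule K V) : Prop :=
  Antitone X ∧ (∀ i, finrank K (X i) = n - (i : ℕ)) ∧ ∀ i, IsCompl (X i) (H i)

theorem IsAdaptedTo.isOppositeFlag_coflag [FiniteDimensional K V] (hV : finrank K V = n)
    (hH : Monotone H) (hdim : ∀ i, finrank K (H i) = i) {v : Fin n → V} (hv : IsAdaptedTo H v) :
    IsOppositeFlag H (coflag K v) := by
  have hli := hv.linearIndependent hH
  refine ⟨coflag_antitone v, finrank_coflag hli, fun i => ?_⟩
  rw [isCompl_iff_disjoint _ _ (by rw [finrank_coflag hli, hdim]; omega),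
    ← hv.span_image_eq hH hdim i]
  refine hli.disjoint_span_image ?_
  simp only [coe_filter, Set.disjoint_left, Set.mem_ofPred_eq, mem_univ, true_and]
  omega

theorem IsOppositeFlag.coflag_eq [FiniteDimensional K V] (hH : Monotone H)
    {X : Fin (n + 1) → Submodule K V} (hX : IsOppositeFlag H X) {v : Fin n → V}
    (hv : IsAdaptedTo H v) (hvX : ∀ j, v j ∈ X j.castSucc) : coflag K v = X := by
  funext i
  refine eq_of_le_of_finrank_le (coflag_le_iff.mpr fun j hij => hX.1 ?_ (hvX j)) ?_
  · simpa [Fin.le_def] using hij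
  · rw [hX.2.1, finrank_coflag (hv.linearIndependent hH)]

theorem natCard_isOppositeFlag [FiniteDimensional K V] (hV : finrank K V = n) (hH : Monotone H)
    (hdim : ∀ i, finrank K (H i) = i) :
    Nat.card {X // IsOppositeFlag H X} = ∏ j : Fin n, Nat.card (H j.castSucc) := by
  obtain ⟨e, he⟩ := exists_isAdaptedTo hH hdim
  have hadapted (g : ∀ j : Fin n, H j.castSucc) : IsAdaptedTo H (e + fun j => (g j : V)) :=
    he.add hH fun j => (g j).2
  let Φ (g : ∀ j : Fin n, H j.castSucc) : {X // IsOppositeFlag H X} :=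
    ⟨coflag K (e + fun j => (g j : V)), (hadapted g).isOppositeFlag_coflag hV hH hdim⟩
  rw [← Nat.card_pi, Nat.card_eq_of_bijective Φ ⟨fun g g' hΦ => ?_, fun ⟨X, hX⟩ => ?_⟩]
  · funext j
    have hcompl := (Φ g).2.2.2 j.castSucc
    refine Subtype.ext (eq_of_add_mem_of_disjoint hcompl.disjoint (g j).2 (g' j).2
      (apply_mem_coflag _ le_rfl) ?_)
    rw [show (Φ g).1 = (Φ g').1 from congrArg Subtype.val hΦ]
    exact apply_mem_coflag _ le_rfl
  · choose h hmem hadd using fun j : Fin n =>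
      exists_add_mem_of_codisjoint (hX.2.2 j.castSucc).codisjoint (e j)
    exact ⟨fun j => ⟨h j, hmem j⟩, Subtype.ext (hX.coflag_eq hH (hadapted _) hadd)⟩

theorem natCard_isOppositeFlag_eq_pow [Finite K] [FiniteDimensional K V] (hV : finrank K V = n)
    (hH : Monotone H) (hdim : ∀ i, finrank K (H i) = i) :
    Nat.card {X // IsOppositeFlag H X} = Nat.card K ^ (n * (n - 1) / 2) := by
  have hcard (j : Fin n) : Nat.card (H j.castSucc) = Nat.card K ^ (j : ℕ) := by
    rw [natCard_eq_pow_finrank (K := K), hdim, Fin.val_castSucc]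
  rw [natCard_isOppositeFlag hV hH hdim, prod_congr rfl fun j _ => hcard j, prod_pow_eq_pow_sum,
    Fin.sum_univ_eq_sum_range (fun j => j), sum_range_id]

end DivisionRing

/-- Let `Q` be an `n`-dimensional vector space over `F_p` and fix a
complete ascending flag `0 = H_0 < H_1 < ⋯ < H_n = Q`.  Then the number of complete
descending flags `Q = X_0 > X_1 > ⋯ > X_n = 0` with `X_i ⊕ H_i = Q` for all `i`
(i.e. of complete flags opposite to the given one) equals `p^(n(n-1)/2)`. -/
theorem card_opposite_flags
    (p : ℕ) [Fact p.Prime] (Q : Type*) [AddCommGroup Q] [Module (ZMod p) Q]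
    [FiniteDimensional (ZMod p) Q] (n : ℕ) (hn : Module.finrank (ZMod p) Q = n)
    (H : Fin (n + 1) → Submodule (ZMod p) Q) (hmono : Monotone H)
    (hdim : ∀ i, Module.finrank (ZMod p) (H i) = (i : ℕ)) :
    Nat.card {X : Fin (n + 1) → Submodule (ZMod p) Q //
        Antitone X ∧ (∀ i, Module.finrank (ZMod p) (X i) = n - (i : ℕ)) ∧
        (∀ i, IsCompl (X i) (H i))} = p ^ (n * (n - 1) / 2) := by
  exact (natCard_isOppositeFlag_eq_pow hn hmono hdim).trans (by rw [Nat.card_zmod])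
end
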